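/- Let 1 ≤ m < n and ∅ ≠ B ⊆ [n]∖[m], and let f : 𝔽₂ⁿ → 𝔽₂ be defined by f(x) = 1 if and only if supp(x) is a nonempty down-closed subset of ℍ(m,n) contained in [m] ∪ B. Then: wt(c_f(0,0)) = 0; wt(c_f(0,u)) = 2^{n−1} for all u ≠ 0; wt(c_f(1,0)) = 2^m + 2^{|B|} − 2; and for every nonzero u = (v,w) ∈ 𝔽₂ⁿ, wt(c_f(1,u)) = 2^{n−1} − 1 + 2^m·χ₀ + (−1)^{wt(v)}·(2^{|B|}·χ_B − 1), where χ₀ = 1 iff v = 0 and χ_B = 1 iff supp(w) ∩ B = ∅ (each being 0 otherwise). -/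

import Mathlib

open Finset

/-- The order relation of the hierarchical poset `ℍ(m,n)` on `Fin n`:
`i ⪯ j` iff `i = j`, or `i` lies in the bottom level `[m]` and `j` in the top level. -/
def Hle (n m : ℕ) (i j : Fin n) : Prop :=
  i = j ∨ ((i : ℕ) < m ∧ m ≤ (j : ℕ))

instance (n m : ℕ) : DecidableRel (Hle n m) := fun i j =>
  decidable_of_iff (i = j ∨ ((i : ℕ) < m ∧ m ≤ (j : ℕ))) Iff.rfl

/-- Down-closed subsets of the hierarchical poset `ℍ(m,n)`. -/
def HDownClosed (n m : ℕ) (S : Finset (Fin n)) : Prop :=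
  ∀ i j : Fin n, Hle n m i j → j ∈ S → i ∈ S

instance (n m : ℕ) : DecidablePred (HDownClosed n m) := fun S =>
  decidable_of_iff (∀ i j : Fin n, Hle n m i j → j ∈ S → i ∈ S) Iff.rfl

/-- The bottom level `[m]` of `ℍ(m,n)`, viewed inside `Fin n`. -/
def lowSet (n m : ℕ) : Finset (Fin n) :=
  Finset.univ.filter (fun i => (i : ℕ) < m)

/-- The support of a vector of `𝔽₂ⁿ`, as a subset of `[n]`. -/
def supp {n : ℕ} (x : Fin n → ZMod 2) : Finset (Fin n) :=
  Finset.univ.filter (fun i => x i ≠ 0)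

/-- The standard inner product on `𝔽₂ⁿ`. -/
def ip {n : ℕ} (u x : Fin n → ZMod 2) : ZMod 2 := ∑ i, u i * x i

/-- The Hamming weight of the codeword `c_{D,u} = (u·x)_{x ∈ D}`. -/
def wtD {n : ℕ} (D : Finset (Fin n → ZMod 2)) (u : Fin n → ZMod 2) : ℕ :=
  (D.filter (fun x => ip u x = 1)).card

/-- The Hamming weight of the codeword `c_f(s,u) = (s·f(x) + u·x)_{x ∈ 𝔽₂ⁿ ∖ {0}}`. -/
def wtF {n : ℕ} (f : (Fin n → ZMod 2) → ZMod 2) (s : ZMod 2) (u : Fin n → ZMod 2) : ℕ :=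
  (Finset.univ.filter (fun x : Fin n → ZMod 2 => x ≠ 0 ∧ s * f x + ip u x = 1)).card

/-- The Hamming weight of the first `m` coordinates of `u` (the part `v` of `u = (v,w)`). -/
def wtLow (n m : ℕ) (u : Fin n → ZMod 2) : ℕ :=
  (Finset.univ.filter (fun i : Fin n => (i : ℕ) < m ∧ u i ≠ 0)).card

/-!
Write `χ(a) = (-1)^a` for `a ∈ 𝔽₂`. When `f 0 = 0`, pointwise
`[s f(x) + u·x = 1] = [u·x = 1] + [s f(x) = 1] χ(u·x)`, so
`wt(c_f(s,u)) = #{x | u·x = 1} + ∑_{s f(x) = 1} χ(u·x)`, and the first term is `2^{n-1}` for `u ≠ 0`.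

A subset of `ℍ(m,n)` is down-closed iff it lies inside `[m]` or contains `[m]`. Hence the support
of `f` is the union of the two coordinate subcubes `{x ⊆ [m]}` and `{[m] ∪ y | y ⊆ B}`, minus the
zero vector; the two cubes meet only in the indicator of `[m]`. Over a subcube `b + 𝔽₂^s` the
character sum `∑ χ(u·x)` factorises coordinatewise, and equals `χ(u·b) 2^{|s|}` if `u` vanishes
on `s` and `0` otherwise.
-/

namespace AddChar

lemma map_sum_eq_prod {ι A M : Type*} [AddCommMonoid A] [CommMonoid M] (ψ : AddChar A M)
    (s : Finset ι) (f : ι → A) : ψ (∑ i ∈ s, f i) = ∏ i ∈ s, ψ (f i) := by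
  induction s using Finset.cons_induction with
  | empty => simp
  | cons a s _ ih => rw [sum_cons, prod_cons, map_add_eq_mul, ih]

end AddChar

def signChar : AddChar (ZMod 2) ℤ where
  toFun a := if a = 0 then 1 else -1
  map_zero_eq_one' := rfl
  map_add_eq_mul' := by decide

lemma sum_signChar_mul (a : ZMod 2) : ∑ t, signChar (a * t) = if a = 0 then 2 else 0 := by
  revert a; decide

lemma signChar_natCast (k : ℕ) : signChar k = (-1) ^ k := by
  rw [← nsmul_one, AddChar.map_nsmul_eq_pow]; rfl

section Cube

variable {n : ℕ}

def cube (s : Finset (Fin n)) (b : Fin n → ZMod 2) : Finset (Fin n → ZMod 2) :=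
  Fintype.piFinset fun i => if i ∈ s then univ else {b i}

lemma mem_cube {s : Finset (Fin n)} {b x : Fin n → ZMod 2} :
    x ∈ cube s b ↔ ∀ i ∉ s, x i = b i := by
  simp only [cube, Fintype.mem_piFinset]
  refine forall_congr' fun i => ?_
  split_ifs with h <;> simp [h]

lemma signChar_ip (u x : Fin n → ZMod 2) : signChar (ip u x) = ∏ i, signChar (u i * x i) :=
  signChar.map_sum_eq_prod _ _

lemma sum_cube_signChar_ip (s : Finset (Fin n)) (b u : Fin n → ZMod 2) :
    ∑ x ∈ cube s b, signChar (ip u x)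
      = signChar (ip u b) * if ∀ i ∈ s, u i = 0 then 2 ^ s.card else 0 := by
  have hfactor : ∀ i, ∑ t ∈ (if i ∈ s then univ else {b i}), signChar (u i * t)
      = signChar (u i * b i) * if i ∈ s then (if u i = 0 then 2 else 0) else 1 := by
    intro i
    by_cases hi : i ∈ s
    · by_cases hu : u i = 0 <;> simp [hi, hu, sum_signChar_mul]
    · simp [hi]
  simp only [cube, signChar_ip]
  rw [← prod_univ_sum (fun i => if i ∈ s then univ else {b i}) fun i t => signChar (u i * t)]
  simp only [hfactor, prod_mul_distrib, prod_ite_mem, prod_ite_zero, prod_const, univ_inter]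

lemma cube_univ (b : Fin n → ZMod 2) : cube univ b = univ :=
  eq_univ_of_forall fun _ => mem_cube.2 fun i hi => absurd (mem_univ i) hi

lemma card_filter_ip_eq_one {u : Fin n → ZMod 2} (hu : u ≠ 0) :
    #{x | ip u x = 1} = 2 ^ (n - 1) := by
  have hdouble : 2 * (#{x | ip u x = 1} : ℤ) = 2 ^ n := by
    have hpt : ∀ x, 2 * (if ip u x = 1 then 1 else 0 : ℤ) = 1 - signChar (ip u x) := by
      intro x; generalize ip u x = a; revert a; decide
    have hu' : ¬ ∀ i ∈ (univ : Finset (Fin n)), u i = 0 := fun h =>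
      hu (funext fun i => h i (mem_univ i))
    have hsum := sum_cube_signChar_ip univ 0 u
    rw [cube_univ, if_neg hu', mul_zero] at hsum
    rw [natCast_card_filter, mul_sum]
    simp only [hpt, sum_sub_distrib, hsum]
    simp
  obtain ⟨k, rfl⟩ : ∃ k, n = k + 1 := by
    obtain ⟨i, -⟩ := Function.ne_iff.1 hu
    exact ⟨n - 1, by have := i.pos; omega⟩
  rw [Nat.add_sub_cancel]
  exact_mod_cast (by rw [pow_succ] at hdouble; linarith : (#{x | ip u x = 1} : ℤ) = 2 ^ k)

lemma wtF_eq_card_add_sum_signChar {f : (Fin n → ZMod 2) → ZMod 2} (hf0 : f 0 = 0) (s : ZMod 2)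
    (u : Fin n → ZMod 2) :
    (wtF f s u : ℤ) = #{x | ip u x = 1} + ∑ x with s * f x = 1, signChar (ip u x) := by
  have hpt : ∀ a b : ZMod 2, (if a + b = 1 then 1 else 0 : ℤ)
      = (if b = 1 then 1 else 0) + if a = 1 then signChar b else 0 := by decide
  have hx0 : ∀ x : Fin n → ZMod 2, s * f x + ip u x = 1 → x ≠ 0 := by
    rintro x h rfl
    simp [hf0, ip] at h
  rw [wtF, filter_congr fun x _ => and_iff_right_of_imp (hx0 x), natCast_card_filter,
    natCast_card_filter, sum_filter, ← sum_add_distrib]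
  exact sum_congr rfl fun x _ => hpt _ _

end Cube

section Hierarchical

variable {n m : ℕ}

lemma mem_lowSet {i : Fin n} : i ∈ lowSet n m ↔ (i : ℕ) < m := by
  simp [lowSet]

lemma card_lowSet (h : m ≤ n) : #(lowSet n m) = m := by
  rw [lowSet, Fin.card_filter_val_lt, min_eq_right h]

lemma hDownClosed_iff {S : Finset (Fin n)} :
    HDownClosed n m S ↔ S ⊆ lowSet n m ∨ lowSet n m ⊆ S := by
  constructor
  · intro hS
    by_contra! h
    obtain ⟨j, hjS, hj⟩ := not_subset.1 h.1
    obtain ⟨i, hi, hiS⟩ := not_subset.1 h.2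
    rw [mem_lowSet] at hi hj
    exact hiS (hS i j (Or.inr ⟨hi, not_lt.1 hj⟩) hjS)
  · rintro (hS | hS) i j (rfl | ⟨hi, hj⟩) hjS
    · exact hjS
    · exact absurd (mem_lowSet.1 (hS hjS)) (not_lt.2 hj)
    · exact hjS
    · exact hS (mem_lowSet.2 hi)

def lowIndicator (n m : ℕ) : Fin n → ZMod 2 := fun i => if (i : ℕ) < m then 1 else 0

lemma mem_supp {x : Fin n → ZMod 2} {i : Fin n} : i ∈ supp x ↔ x i ≠ 0 := by
  simp [supp]

lemma supp_nonempty_iff {x : Fin n → ZMod 2} : (supp x).Nonempty ↔ x ≠ 0 := by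
  simp [Finset.Nonempty, mem_supp, Function.ne_iff]

lemma supp_subset_iff_mem_cube {s : Finset (Fin n)} {x : Fin n → ZMod 2} :
    supp x ⊆ s ↔ x ∈ cube s 0 := by
  simp only [mem_cube, subset_iff, mem_supp, Pi.zero_apply]
  exact ⟨fun h i hi => by_contra fun hx => hi (h hx),
    fun h i hx => by_contra fun hi => hx (h i hi)⟩

lemma mem_cube_lowIndicator {B : Finset (Fin n)} (hB : ∀ j ∈ B, m ≤ (j : ℕ))
    {x : Fin n → ZMod 2} :
    x ∈ cube B (lowIndicator n m) ↔ lowSet n m ⊆ supp x ∧ supp x ⊆ lowSet n m ∪ B := by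
  have hZ2 : ∀ a : ZMod 2, a ≠ 0 ↔ a = 1 := by decide
  simp only [mem_cube, lowIndicator, subset_iff, mem_supp, mem_union, mem_lowSet]
  constructor
  · intro h
    refine ⟨fun i hi => ?_, fun i hx => ?_⟩
    · rw [h i fun hiB => (hB i hiB).not_gt hi, if_pos hi]
      exact one_ne_zero
    · by_contra! hi
      rw [h i hi.2, if_neg hi.1.not_gt] at hx
      exact hx rfl
  · rintro ⟨hlow, hsub⟩ i hiB
    split_ifs with hi
    · exact (hZ2 _).1 (hlow hi)
    · by_contra hx
      exact (hsub hx).elim hi hiB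

end Hierarchical

section Support

variable {n m : ℕ} {B : Finset (Fin n)}

lemma filter_eq_one_eq_erase (hB : ∀ j ∈ B, m ≤ (j : ℕ)) {f : (Fin n → ZMod 2) → ZMod 2}
    (hf : ∀ x, f x = 1 ↔
      ((supp x).Nonempty ∧ HDownClosed n m (supp x) ∧ supp x ⊆ lowSet n m ∪ B)) :
    ({x | f x = 1} : Finset _) = (cube (lowSet n m) 0 ∪ cube B (lowIndicator n m)).erase 0 := by
  ext x
  have hlow : supp x ⊆ lowSet n m → supp x ⊆ lowSet n m ∪ B :=
    fun h => h.trans subset_union_left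
  simp only [mem_filter, mem_univ, true_and, mem_erase, mem_union, hf, supp_nonempty_iff,
    hDownClosed_iff, ← supp_subset_iff_mem_cube, mem_cube_lowIndicator hB]
  tauto

lemma cube_lowSet_inter_cube_lowIndicator (hB : ∀ j ∈ B, m ≤ (j : ℕ)) :
    cube (lowSet n m) 0 ∩ cube B (lowIndicator n m) = {lowIndicator n m} := by
  ext x
  simp only [mem_inter, mem_singleton, mem_cube, mem_lowSet, not_lt, lowIndicator, Pi.zero_apply]
  constructor
  · rintro ⟨hhigh, hoff⟩
    funext i
    by_cases hiB : i ∈ B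
    · rw [hhigh i (hB i hiB)]
      exact (if_neg (hB i hiB).not_gt).symm
    · exact hoff i hiB
  · rintro rfl
    exact ⟨fun i hi => if_neg hi.not_gt, fun _ _ => rfl⟩

lemma signChar_ip_lowIndicator (u : Fin n → ZMod 2) :
    signChar (ip u (lowIndicator n m)) = (-1) ^ wtLow n m u := by
  have hpt : ∀ i, u i * lowIndicator n m i = if (i : ℕ) < m ∧ u i ≠ 0 then 1 else 0 := by
    intro i
    obtain hu | hu : u i = 0 ∨ u i = 1 := by generalize u i = a; revert a; decide
    all_goals by_cases hi : (i : ℕ) < m <;> simp [lowIndicator, hi, hu]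
  rw [ip, sum_congr rfl fun i _ => hpt i, sum_boole, ← signChar_natCast, wtLow]

lemma sum_signChar_ip_filter_eq_one (hmn : m ≤ n) (hB : ∀ j ∈ B, m ≤ (j : ℕ))
    {f : (Fin n → ZMod 2) → ZMod 2}
    (hf : ∀ x, f x = 1 ↔
      ((supp x).Nonempty ∧ HDownClosed n m (supp x) ∧ supp x ⊆ lowSet n m ∪ B))
    (u : Fin n → ZMod 2) :
    ∑ x with f x = 1, signChar (ip u x)
      = (if ∀ i : Fin n, (i : ℕ) < m → u i = 0 then 2 ^ m else 0) - 1
        + (-1) ^ wtLow n m u * ((if ∀ j ∈ B, u j = 0 then 2 ^ B.card else 0) - 1) := by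
  have h0 : (0 : Fin n → ZMod 2) ∈ cube (lowSet n m) 0 ∪ cube B (lowIndicator n m) :=
    mem_union_left _ (mem_cube.2 fun _ _ => rfl)
  have hunion := sum_union_inter (s₁ := cube (lowSet n m) 0) (s₂ := cube B (lowIndicator n m))
    (f := fun x => signChar (ip u x))
  rw [cube_lowSet_inter_cube_lowIndicator hB, sum_singleton] at hunion
  rw [filter_eq_one_eq_erase hB hf, sum_erase_eq_sub h0, eq_sub_of_add_eq hunion,
    sum_cube_signChar_ip, sum_cube_signChar_ip, signChar_ip_lowIndicator, card_lowSet hmn]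
  simp only [ip, Pi.zero_apply, mul_zero, sum_const_zero, AddChar.map_zero_eq_one, mem_lowSet,
    mul_ite, one_mul]
  split_ifs <;> ring

end Support

theorem stmt_9_general (n m : ℕ) (hmn : m < n)
    (B : Finset (Fin n)) (hB : ∀ j ∈ B, m ≤ (j : ℕ))
    (f : (Fin n → ZMod 2) → ZMod 2)
    (hf : ∀ x, f x = 1 ↔
      ((supp x).Nonempty ∧ HDownClosed n m (supp x) ∧ supp x ⊆ lowSet n m ∪ B)) :
    wtF f 0 0 = 0
    ∧ (∀ u : Fin n → ZMod 2, u ≠ 0 → wtF f 0 u = 2 ^ (n - 1))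
    ∧ (wtF f 1 0 : ℤ) = 2 ^ m + 2 ^ B.card - 2
    ∧ ∀ u : Fin n → ZMod 2, u ≠ 0 →
        (wtF f 1 u : ℤ) =
          2 ^ (n - 1) - 1
          + 2 ^ m * (if ∀ i : Fin n, (i : ℕ) < m → u i = 0 then 1 else 0)
          + (-1) ^ (wtLow n m u) *
              (2 ^ B.card * (if ∀ j ∈ B, u j = 0 then 1 else 0) - 1) := by
  have hf0 : f 0 = 0 := by
    have h : f 0 ≠ 1 := fun h => by simpa [supp_nonempty_iff] using ((hf 0).1 h).1
    generalize f 0 = a at h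
    revert a; decide
  have hwt := wtF_eq_card_add_sum_signChar hf0
  have hsum := sum_signChar_ip_filter_eq_one hmn.le hB hf
  have hip_zero : #{x : Fin n → ZMod 2 | ip 0 x = 1} = 0 := by simp [ip]
  refine ⟨?_, fun u hu => ?_, ?_, fun u hu => ?_⟩
  · simpa [hip_zero] using hwt 0 0
  · have h : (wtF f 0 u : ℤ) = 2 ^ (n - 1) := by simpa [card_filter_ip_eq_one hu] using hwt 0 u
    exact_mod_cast h
  · rw [hwt, hip_zero]
    simp only [one_mul, hsum]
    simp only [CharP.cast_eq_zero, Pi.zero_apply, implies_true, ↓reduceIte, wtLow, ne_eq,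
      not_true_eq_false, and_false, filter_false, card_empty, pow_zero, one_mul]
    ring
  · rw [hwt, card_filter_ip_eq_one hu]
    simp only [one_mul, hsum]
    push_cast
    split_ifs <;> ring

/-- **Theorem 5.5(2).**  Let `1 ≤ m < n`, `∅ ≠ B ⊆ [n] ∖ [m]`, and let `f` be the
indicator of the nonempty down-closed subsets of `ℍ(m,n)` contained in `[m] ∪ B`.
Then: `wt(c_f(0,0)) = 0`; `wt(c_f(0,u)) = 2^{n−1}` for `u ≠ 0`;
`wt(c_f(1,0)) = 2^m + 2^{|B|} − 2`; and for nonzero `u = (v,w)`,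
`wt(c_f(1,u)) = 2^{n−1} − 1 + 2^m·χ₀ + (−1)^{wt(v)}·(2^{|B|}·χ_B − 1)`. -/
theorem stmt_9 (n m : ℕ) (hm : 1 ≤ m) (hmn : m < n)
    (B : Finset (Fin n)) (hBne : B.Nonempty) (hB : ∀ j ∈ B, m ≤ (j : ℕ))
    (f : (Fin n → ZMod 2) → ZMod 2)
    (hf : ∀ x, f x = 1 ↔
      ((supp x).Nonempty ∧ HDownClosed n m (supp x) ∧ supp x ⊆ lowSet n m ∪ B)) :
    wtF f 0 0 = 0
    ∧ (∀ u : Fin n → ZMod 2, u ≠ 0 → wtF f 0 u = 2 ^ (n - 1))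
    ∧ (wtF f 1 0 : ℤ) = 2 ^ m + 2 ^ B.card - 2
    ∧ ∀ u : Fin n → ZMod 2, u ≠ 0 →
        (wtF f 1 u : ℤ) =
          2 ^ (n - 1) - 1
          + 2 ^ m * (if ∀ i : Fin n, (i : ℕ) < m → u i = 0 then 1 else 0)
          + (-1) ^ (wtLow n m u) *
              (2 ^ B.card * (if ∀ j ∈ B, u j = 0 then 1 else 0) - 1) :=
  stmt_9_general n m hmn B hB f hf
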